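/- arXiv:2009.01425 — 3 statements merged into one kernel-verified Lean document; each statement's English description precedes it below -/
import Mathlib

section
/- Let A = A₀ + A₁ ≥ 1 and b = b₀ + b₁. Then for all N ≥ 0: if A = 1 then Σ(N) = f(1) + b·(2^N − 1); if A = 2 then Σ(N) = 2^N·f(1) + b·N·2^{N−1}; and if A > 2 then Σ(N) = A^N·f(1) + b·(A^N − 2^N)/(A − 2). -/
/-!
Pairing each `2n` with `2n + 1` in the block `[2^(N+1), 2^(N+2))` gives the recurrence
`Σ(N+1) = A·Σ(N) + b·2^N` with `Σ(0) = f(1)`, a first-order affine recurrence whose closed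
form is `A^N·Σ(0) + b·(A^N − 2^N)/(A − 2)` when `A ≠ 2` (for `A = 1` this is
`Σ(0) + b·(2^N − 1)`) and `2^N·Σ(0) + b·N·2^(N−1)` when `A = 2`.
-/

open MeasureTheory Filter Topology

/-- The `N`-th approximant to the ghost measure of `f`: the normalised Dirac comb built from
the values of `f` on the fundamental region `[2^N, 2^(N+1))`. -/
noncomputable def ghostApprox (f : ℕ → ℕ) (N : ℕ) : Measure ℝ :=
  (∑ n ∈ Finset.range (2 ^ N), (f (2 ^ N + n) : ENNReal))⁻¹ •
    ∑ n ∈ Finset.range (2 ^ N), (f (2 ^ N + n) : ENNReal) • Measure.dirac ((n : ℝ) / 2 ^ N)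

/-- Weak (vague) convergence of a sequence of finite measures on `ℝ`. -/
def WeakLimit (μs : ℕ → Measure ℝ) (μ : Measure ℝ) : Prop :=
  ∀ g : BoundedContinuousFunction ℝ ℝ,
    Tendsto (fun N => ∫ x, g x ∂(μs N)) atTop (𝓝 (∫ x, g x ∂μ))

open Finset

theorem Finset.sum_range_two_mul {M : Type*} [AddCommMonoid M] (g : ℕ → M) (k : ℕ) :
    ∑ n ∈ range (2 * k), g n = ∑ i ∈ range k, (g (2 * i) + g (2 * i + 1)) := by
  induction k with
  | zero => simp
  | succ k ih =>
    rw [Nat.mul_succ, sum_range_succ, sum_range_succ, sum_range_succ, ih, add_assoc]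

section Recurrence

variable {K : Type*} [Field K] {a c : K} {s : ℕ → K}

theorem eq_pow_mul_add_of_succ_eq_of_ne_two (ha : a ≠ 2)
    (hs : ∀ N, s (N + 1) = a * s N + c * 2 ^ N) (N : ℕ) :
    s N = a ^ N * s 0 + c * (a ^ N - 2 ^ N) / (a - 2) := by
  have ha' : a - 2 ≠ 0 := sub_ne_zero_of_ne ha
  induction N with
  | zero => simp
  | succ N ih =>
    rw [hs, ih]
    field_simp
    ring

theorem eq_two_pow_mul_add_of_succ_eq [NeZero (2 : K)]
    (hs : ∀ N, s (N + 1) = 2 * s N + c * 2 ^ N) (N : ℕ) :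
    s N = 2 ^ N * s 0 + c * N * 2 ^ N / 2 := by
  induction N with
  | zero => simp
  | succ N ih =>
    rw [hs, ih]
    push_cast
    field_simp
    ring

end Recurrence

/-- The paper's `Σ(N)`. -/
def blockSum {R : Type*} [AddCommMonoid R] (f : ℕ → R) (N : ℕ) : R :=
  ∑ n ∈ range (2 ^ N), f (2 ^ N + n)

theorem blockSum_zero {R : Type*} [AddCommMonoid R] (f : ℕ → R) : blockSum f 0 = f 1 := by
  simp [blockSum]

theorem blockSum_succ {R : Type*} [CommSemiring R] {A₀ A₁ b₀ b₁ : R} {f : ℕ → R}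
    (heven : ∀ n, 1 ≤ n → f (2 * n) = A₀ * f n + b₀)
    (hodd : ∀ n, 1 ≤ n → f (2 * n + 1) = A₁ * f n + b₁) (N : ℕ) :
    blockSum f (N + 1) = (A₀ + A₁) * blockSum f N + (b₀ + b₁) * 2 ^ N := by
  have hpair : ∀ i ∈ range (2 ^ N),
      f (2 * 2 ^ N + 2 * i) + f (2 * 2 ^ N + 2 * i + 1) =
        (A₀ + A₁) * f (2 ^ N + i) + (b₀ + b₁) := by
    intro i _
    have hpos : 1 ≤ 2 ^ N + i := le_add_right Nat.one_le_two_pow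
    rw [← mul_add, heven _ hpos, hodd _ hpos]
    ring
  simp only [blockSum, pow_succ', sum_range_two_mul, ← add_assoc, sum_congr rfl hpair,
    sum_add_distrib, ← mul_sum, sum_const, card_range, nsmul_eq_mul, Nat.cast_pow, Nat.cast_ofNat]
  ring

theorem stmt_0_general (A₀ A₁ b₀ b₁ : ℕ)
    (f : ℕ → ℕ)
    (heven : ∀ n, 1 ≤ n → f (2 * n) = A₀ * f n + b₀)
    (hodd : ∀ n, 1 ≤ n → f (2 * n + 1) = A₁ * f n + b₁) :
    ∀ N : ℕ,
      (A₀ + A₁ = 1 →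
        ((∑ n ∈ Finset.range (2 ^ N), f (2 ^ N + n) : ℕ) : ℚ) =
          f 1 + (b₀ + b₁) * (2 ^ N - 1)) ∧
      (A₀ + A₁ = 2 →
        ((∑ n ∈ Finset.range (2 ^ N), f (2 ^ N + n) : ℕ) : ℚ) =
          2 ^ N * f 1 + (b₀ + b₁) * N * 2 ^ N / 2) ∧
      (2 < A₀ + A₁ →
        ((∑ n ∈ Finset.range (2 ^ N), f (2 ^ N + n) : ℕ) : ℚ) =
          ((A₀ + A₁ : ℚ)) ^ N * f 1 +
            (b₀ + b₁) * (((A₀ + A₁ : ℚ)) ^ N - 2 ^ N) / ((A₀ + A₁ : ℚ) - 2)) := by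
  intro N
  set s := blockSum fun n => (f n : ℚ)
  have hs : ∀ N, s (N + 1) = ((A₀ + A₁ : ℕ) : ℚ) * s N + (b₀ + b₁) * 2 ^ N := by
    push_cast
    exact blockSum_succ (fun n hn => by exact_mod_cast heven n hn)
      (fun n hn => by exact_mod_cast hodd n hn)
  have hsN : ((∑ n ∈ range (2 ^ N), f (2 ^ N + n) : ℕ) : ℚ) = s N := by
    push_cast
    rfl
  have hs0 : s 0 = f 1 := blockSum_zero _
  rw [hsN]
  refine ⟨fun hA => ?_, fun hA => ?_, fun hA => ?_⟩
  · rw [hA, Nat.cast_one] at hs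
    rw [eq_pow_mul_add_of_succ_eq_of_ne_two (by norm_num) hs, hs0]
    ring
  · rw [hA, Nat.cast_ofNat] at hs
    rw [eq_two_pow_mul_add_of_succ_eq hs, hs0]
  · have hA2 : ((A₀ + A₁ : ℕ) : ℚ) ≠ 2 := by exact_mod_cast hA.ne'
    rw [eq_pow_mul_add_of_succ_eq_of_ne_two hA2 hs, hs0]
    push_cast
    ring

theorem stmt_0 (A₀ A₁ b₀ b₁ : ℕ) (hnz : ¬(A₀ = 0 ∧ A₁ = 0 ∧ b₀ = 0 ∧ b₁ = 0))
    (f : ℕ → ℕ) (hf1 : 1 ≤ f 1)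
    (heven : ∀ n, 1 ≤ n → f (2 * n) = A₀ * f n + b₀)
    (hodd : ∀ n, 1 ≤ n → f (2 * n + 1) = A₁ * f n + b₁)
    (hA : 1 ≤ A₀ + A₁) :
    ∀ N : ℕ,
      (A₀ + A₁ = 1 →
        ((∑ n ∈ Finset.range (2 ^ N), f (2 ^ N + n) : ℕ) : ℚ) =
          f 1 + (b₀ + b₁) * (2 ^ N - 1)) ∧
      (A₀ + A₁ = 2 →
        ((∑ n ∈ Finset.range (2 ^ N), f (2 ^ N + n) : ℕ) : ℚ) =
          2 ^ N * f 1 + (b₀ + b₁) * N * 2 ^ N / 2) ∧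
      (2 < A₀ + A₁ →
        ((∑ n ∈ Finset.range (2 ^ N), f (2 ^ N + n) : ℕ) : ℚ) =
          ((A₀ + A₁ : ℚ)) ^ N * f 1 +
            (b₀ + b₁) * (((A₀ + A₁ : ℚ)) ^ N - 2 ^ N) / ((A₀ + A₁ : ℚ) - 2)) :=
  stmt_0_general A₀ A₁ b₀ b₁ f heven hodd
end

section
/- If b₀ + b₁ ≥ 1 and A₀ = A₁ = A > 1, then the approximants μ_N converge weakly to a probability measure μ that is absolutely continuous with respect to Lebesgue measure λ on [0,1). -/
/-!
Put `F_N x = f (2^N + ⌊2^N x⌋) / A^N`. Up to the factor `A^N 2^N`, which cancels in the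
normalisation, `∫ g dμ_N` is the ratio of `∫₀¹ F_N x g(⌊2^N x⌋ / 2^N) dx` and `∫₀¹ F_N`.
Since both branches of the recursion multiply by the same `A`, `F_{N+1} = F_N + b_ε / A^(N+1)`
with `ε` the `(N+1)`-st binary digit of `x`; so `F_N` increases to a limit `F`, and on `[0,1)`
it stays between `f 1` and `f 1 + max b₀ b₁ / (A - 1)`. Dominated convergence then gives
`∫ g dμ_N → ∫ F g dλ / ∫ F dλ`: the weak limit has density `F / ∫ F` with respect to `λ`.
-/

open MeasureTheory Filter Topology

open Set

section NormalizedWithDensity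

variable {α : Type*} [MeasurableSpace α]

noncomputable def normalizedWithDensity (ν : Measure α) (F : α → ℝ) : Measure α :=
  (ENNReal.ofReal (∫ x, F x ∂ν))⁻¹ • ν.withDensity fun x => ENNReal.ofReal (F x)

variable {ν : Measure α} {F : α → ℝ}

lemma normalizedWithDensity_absolutelyContinuous : normalizedWithDensity ν F ≪ ν :=
  (withDensity_absolutelyContinuous _ _).smul_left _

lemma isProbabilityMeasure_normalizedWithDensity (hF : Integrable F ν) (hF0 : 0 ≤ᵐ[ν] F)
    (hpos : 0 < ∫ x, F x ∂ν) : IsProbabilityMeasure (normalizedWithDensity ν F) := by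
  have hmass :
      ν.withDensity (fun x => ENNReal.ofReal (F x)) univ = ENNReal.ofReal (∫ x, F x ∂ν) := by
    rw [withDensity_apply _ MeasurableSet.univ, Measure.restrict_univ,
      ofReal_integral_eq_lintegral_ofReal hF hF0]
  constructor
  rw [normalizedWithDensity, Measure.smul_apply, hmass, smul_eq_mul,
    ENNReal.inv_mul_cancel (ENNReal.ofReal_pos.2 hpos).ne' ENNReal.ofReal_ne_top]

lemma integral_normalizedWithDensity (hF : Measurable F) (hF0 : ∀ x, 0 ≤ F x) (g : α → ℝ) :
    ∫ x, g x ∂normalizedWithDensity ν F = (∫ x, F x * g x ∂ν) / ∫ x, F x ∂ν := by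
  rw [normalizedWithDensity, integral_smul_measure,
    integral_withDensity_eq_integral_toReal_smul hF.ennreal_ofReal
      (ae_of_all _ fun _ => ENNReal.ofReal_lt_top),
    ENNReal.toReal_inv, ENNReal.toReal_ofReal (integral_nonneg hF0), smul_eq_mul, inv_mul_eq_div]
  simp only [ENNReal.toReal_ofReal (hF0 _), smul_eq_mul]

end NormalizedWithDensity

lemma le_add_div_of_le_add_geometric {u : ℕ → ℝ} {B r : ℝ} (hB : 0 ≤ B) (hr0 : 0 ≤ r)
    (hr1 : r < 1) (hu : ∀ N, u (N + 1) ≤ u N + B * r ^ N) (N : ℕ) :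
    u N ≤ u 0 + B / (1 - r) := by
  have hsum : u N - u 0 ≤ B * ∑ i ∈ Finset.range N, r ^ i := by
    rw [← Finset.sum_range_sub, Finset.mul_sum]
    gcongr with i
    linarith [hu i]
  have hgeom : ∑ i ∈ Finset.range N, r ^ i ≤ 1 / (1 - r) := by
    have h := geom_sum_Ico_le_of_lt_one (x := r) (m := 0) (n := N) hr0 hr1
    rwa [← Finset.range_eq_Ico, pow_zero] at h
  have := mul_le_mul_of_nonneg_left hgeom hB
  rw [mul_one_div] at this
  linarith

section NatFloorStep

variable {k : ℕ}

lemma nat_floor_mul_eq_of_mem_Ico (hk : 0 < k) {n : ℕ} {x : ℝ}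
    (hx : x ∈ Ico ((n : ℝ) / k) ((n + 1) / k)) : ⌊(k : ℝ) * x⌋₊ = n := by
  have hk' : (0 : ℝ) < k := by exact_mod_cast hk
  obtain ⟨hlo, hhi⟩ := hx
  rw [div_le_iff₀' hk'] at hlo
  rw [lt_div_iff₀' hk'] at hhi
  exact (Nat.floor_eq_iff ((Nat.cast_nonneg n).trans hlo)).2 ⟨hlo, hhi⟩

lemma Ico_zero_one_eq_biUnion_Ico (hk : 0 < k) :
    Ico (0 : ℝ) 1 = ⋃ n ∈ Finset.range k, Ico ((n : ℝ) / k) ((n + 1) / k) := by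
  have hk' : (0 : ℝ) < k := by exact_mod_cast hk
  ext x
  simp only [mem_Ico, mem_iUnion, Finset.mem_range, exists_prop, div_le_iff₀' hk',
    lt_div_iff₀' hk']
  constructor
  · rintro ⟨hx0, hx1⟩
    have hkx : 0 ≤ (k : ℝ) * x := by positivity
    refine ⟨⌊(k : ℝ) * x⌋₊, (Nat.floor_lt hkx).2 (by nlinarith), Nat.floor_le hkx,
      Nat.lt_floor_add_one _⟩
  · rintro ⟨n, hn, hlo, hhi⟩
    have hn' : (n : ℝ) + 1 ≤ k := by exact_mod_cast hn
    constructor <;> nlinarith [(Nat.cast_nonneg n : (0 : ℝ) ≤ n)]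

lemma setIntegral_Ico_zero_one_nat_floor_mul (hk : 0 < k) (v : ℕ → ℝ) :
    ∫ x in Ico (0 : ℝ) 1, v ⌊(k : ℝ) * x⌋₊ = (∑ n ∈ Finset.range k, v n) / k := by
  have hconst : ∀ n : ℕ, EqOn (fun x : ℝ => v ⌊(k : ℝ) * x⌋₊) (fun _ => v n)
      (Ico ((n : ℝ) / k) ((n + 1) / k)) := fun n x hx => by
    simp only [nat_floor_mul_eq_of_mem_Ico hk hx]
  rw [Ico_zero_one_eq_biUnion_Ico hk, integral_biUnion_finset _ (fun _ _ => measurableSet_Ico)]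
  · rw [Finset.sum_div]
    refine Finset.sum_congr rfl fun n _ => ?_
    rw [setIntegral_congr_fun measurableSet_Ico (hconst n), setIntegral_const,
      measureReal_def, Real.volume_Ico, show ((n : ℝ) + 1) / k - n / k = 1 / k by ring,
      ENNReal.toReal_ofReal (by positivity), smul_eq_mul, one_div, inv_mul_eq_div]
  · intro i _ j _ hij
    refine Set.disjoint_left.2 fun x hxi hxj => hij ?_
    rw [← nat_floor_mul_eq_of_mem_Ico hk hxi, nat_floor_mul_eq_of_mem_Ico hk hxj]
  · exact fun n _ => (integrableOn_const measure_Ico_lt_top.ne).congr_fun (hconst n).symm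
      measurableSet_Ico

end NatFloorStep

section GhostDensity

variable {A b₀ b₁ : ℕ} {f : ℕ → ℕ}

noncomputable def ghostDensityApprox (f : ℕ → ℕ) (A N : ℕ) (x : ℝ) : ℝ :=
  f (2 ^ N + ⌊(2 : ℝ) ^ N * x⌋₊) / (A : ℝ) ^ N

noncomputable def ghostDensity (f : ℕ → ℕ) (A : ℕ) (x : ℝ) : ℝ :=
  ⨆ N, ghostDensityApprox f A N x

lemma apply_two_pow_succ_add (heven : ∀ n, 1 ≤ n → f (2 * n) = A * f n + b₀)
    (hodd : ∀ n, 1 ≤ n → f (2 * n + 1) = A * f n + b₁) (N m : ℕ) :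
    f (2 ^ (N + 1) + m) = A * f (2 ^ N + m / 2) + if m % 2 = 0 then b₀ else b₁ := by
  have hpos : 0 < 2 ^ N := Nat.two_pow_pos N
  rw [pow_succ]
  split_ifs with hm
  · rw [show 2 ^ N * 2 + m = 2 * (2 ^ N + m / 2) by omega, heven _ (by omega)]
  · rw [show 2 ^ N * 2 + m = 2 * (2 ^ N + m / 2) + 1 by omega, hodd _ (by omega)]

lemma nat_floor_two_pow_succ_mul_div_two (N : ℕ) (x : ℝ) :
    ⌊(2 : ℝ) ^ (N + 1) * x⌋₊ / 2 = ⌊(2 : ℝ) ^ N * x⌋₊ := by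
  rw [← Nat.floor_div_ofNat, pow_succ, mul_right_comm, mul_div_cancel_right₀ _ two_ne_zero]

lemma ghostDensityApprox_succ (hA : A ≠ 0) (heven : ∀ n, 1 ≤ n → f (2 * n) = A * f n + b₀)
    (hodd : ∀ n, 1 ≤ n → f (2 * n + 1) = A * f n + b₁) (N : ℕ) (x : ℝ) :
    ghostDensityApprox f A (N + 1) x = ghostDensityApprox f A N x +
      (if ⌊(2 : ℝ) ^ (N + 1) * x⌋₊ % 2 = 0 then b₀ else b₁ : ℕ) / (A : ℝ) ^ (N + 1) := by
  have hA' : (A : ℝ) ≠ 0 := by exact_mod_cast hA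
  rw [ghostDensityApprox, ghostDensityApprox, apply_two_pow_succ_add heven hodd,
    nat_floor_two_pow_succ_mul_div_two]
  push_cast
  field_simp
  ring

lemma ghostDensityApprox_nonneg (N : ℕ) (x : ℝ) : 0 ≤ ghostDensityApprox f A N x := by
  unfold ghostDensityApprox
  positivity

lemma ghostDensityApprox_zero_of_mem_Ico {x : ℝ} (hx : x ∈ Ico (0 : ℝ) 1) :
    ghostDensityApprox f A 0 x = f 1 := by
  simp [ghostDensityApprox, Nat.floor_eq_zero.2 hx.2]

lemma measurable_ghostDensityApprox (N : ℕ) : Measurable (ghostDensityApprox f A N) := by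
  unfold ghostDensityApprox
  fun_prop

lemma monotone_ghostDensityApprox (hA : A ≠ 0) (heven : ∀ n, 1 ≤ n → f (2 * n) = A * f n + b₀)
    (hodd : ∀ n, 1 ≤ n → f (2 * n + 1) = A * f n + b₁) (x : ℝ) :
    Monotone fun N => ghostDensityApprox f A N x :=
  monotone_nat_of_le_succ fun N => by
    rw [ghostDensityApprox_succ hA heven hodd]
    exact le_add_of_nonneg_right (by positivity)

lemma ghostDensityApprox_le (hA : 1 < A) (heven : ∀ n, 1 ≤ n → f (2 * n) = A * f n + b₀)
    (hodd : ∀ n, 1 ≤ n → f (2 * n + 1) = A * f n + b₁) (N : ℕ) (x : ℝ) :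
    ghostDensityApprox f A N x ≤ ghostDensityApprox f A 0 x + max b₀ b₁ / ((A : ℝ) - 1) := by
  have hA' : (1 : ℝ) < A := by exact_mod_cast hA
  have hconst : (max b₀ b₁ / A : ℝ) / (1 - (A : ℝ)⁻¹) = max b₀ b₁ / ((A : ℝ) - 1) := by
    field_simp
  rw [← hconst]
  refine le_add_div_of_le_add_geometric (u := fun N => ghostDensityApprox f A N x)
    (B := max b₀ b₁ / A) (by positivity) (by positivity) (inv_lt_one_of_one_lt₀ hA')
    (fun M => ?_) N
  rw [ghostDensityApprox_succ (by omega) heven hodd, inv_pow, div_mul_eq_mul_div,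
    ← div_eq_mul_inv, div_div, ← pow_succ]
  gcongr
  split_ifs <;> simp

lemma measurable_ghostDensity : Measurable (ghostDensity f A) :=
  Measurable.iSup fun _ => measurable_ghostDensityApprox _

lemma ghostDensity_nonneg (x : ℝ) : 0 ≤ ghostDensity f A x :=
  Real.iSup_nonneg fun _ => ghostDensityApprox_nonneg _ _

lemma tendsto_ghostDensityApprox (hA : 1 < A) (heven : ∀ n, 1 ≤ n → f (2 * n) = A * f n + b₀)
    (hodd : ∀ n, 1 ≤ n → f (2 * n + 1) = A * f n + b₁) (x : ℝ) :
    Tendsto (fun N => ghostDensityApprox f A N x) atTop (𝓝 (ghostDensity f A x)) :=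
  tendsto_atTop_ciSup (monotone_ghostDensityApprox (by omega) heven hodd x)
    ⟨_, forall_mem_range.2 fun N => ghostDensityApprox_le hA heven hodd N x⟩

lemma ghostDensityApprox_mem_Icc (hA : 1 < A) (heven : ∀ n, 1 ≤ n → f (2 * n) = A * f n + b₀)
    (hodd : ∀ n, 1 ≤ n → f (2 * n + 1) = A * f n + b₁) {x : ℝ} (hx : x ∈ Ico (0 : ℝ) 1)
    (N : ℕ) : ghostDensityApprox f A N x ∈
      Icc (f 1 : ℝ) (f 1 + max b₀ b₁ / ((A : ℝ) - 1)) := by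
  rw [← ghostDensityApprox_zero_of_mem_Ico (A := A) hx]
  exact ⟨monotone_ghostDensityApprox (by omega) heven hodd x (Nat.zero_le N),
    ghostDensityApprox_le hA heven hodd N x⟩

lemma ghostDensity_mem_Icc (hA : 1 < A) (heven : ∀ n, 1 ≤ n → f (2 * n) = A * f n + b₀)
    (hodd : ∀ n, 1 ≤ n → f (2 * n + 1) = A * f n + b₁) {x : ℝ} (hx : x ∈ Ico (0 : ℝ) 1) :
    ghostDensity f A x ∈ Icc (f 1 : ℝ) (f 1 + max b₀ b₁ / ((A : ℝ) - 1)) :=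
  isClosed_Icc.mem_of_tendsto (tendsto_ghostDensityApprox hA heven hodd x)
    (Eventually.of_forall (ghostDensityApprox_mem_Icc hA heven hodd hx))

lemma integrableOn_ghostDensity (hA : 1 < A) (heven : ∀ n, 1 ≤ n → f (2 * n) = A * f n + b₀)
    (hodd : ∀ n, 1 ≤ n → f (2 * n + 1) = A * f n + b₁) :
    IntegrableOn (ghostDensity f A) (Ico (0 : ℝ) 1) :=
  IntegrableOn.of_bound measure_Ico_lt_top measurable_ghostDensity.aestronglyMeasurable _
    (ae_restrict_of_forall_mem measurableSet_Ico fun x hx => by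
      rw [Real.norm_of_nonneg (ghostDensity_nonneg x)]
      exact (ghostDensity_mem_Icc hA heven hodd hx).2)

lemma setIntegral_ghostDensity_pos (hf1 : 1 ≤ f 1) (hA : 1 < A)
    (heven : ∀ n, 1 ≤ n → f (2 * n) = A * f n + b₀)
    (hodd : ∀ n, 1 ≤ n → f (2 * n + 1) = A * f n + b₁) :
    0 < ∫ x in Ico (0 : ℝ) 1, ghostDensity f A x := by
  have hmono : ∫ _ in Ico (0 : ℝ) 1, (f 1 : ℝ) ≤ ∫ x in Ico (0 : ℝ) 1, ghostDensity f A x :=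
    setIntegral_mono_on (integrable_const _) (integrableOn_ghostDensity hA heven hodd)
      measurableSet_Ico fun x hx => (ghostDensity_mem_Icc hA heven hodd hx).1
  have hf1' : (1 : ℝ) ≤ f 1 := by exact_mod_cast hf1
  simp only [setIntegral_const, Real.volume_real_Ico, sub_zero, max_eq_left zero_le_one,
    one_smul] at hmono
  linarith

lemma integral_ghostApprox (g : BoundedContinuousFunction ℝ ℝ) (N : ℕ) :
    ∫ x, g x ∂ghostApprox f N = (∑ n ∈ Finset.range (2 ^ N), (f (2 ^ N + n) : ℝ) *
      g (n / 2 ^ N)) / ∑ n ∈ Finset.range (2 ^ N), (f (2 ^ N + n) : ℝ) := by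
  unfold ghostApprox
  rw [integral_smul_measure, integral_finsetSum_measure
    fun _ _ => (g.integrable _).smul_measure (ENNReal.natCast_ne_top _)]
  simp only [integral_smul_measure, integral_dirac, ENNReal.toReal_natCast, smul_eq_mul]
  rw [← Nat.cast_sum, ENNReal.toReal_inv, ENNReal.toReal_natCast, inv_mul_eq_div, Nat.cast_sum]

lemma sum_eq_setIntegral_ghostDensityApprox (hA : A ≠ 0) (N : ℕ) (v : ℝ → ℝ) :
    ∑ n ∈ Finset.range (2 ^ N), (f (2 ^ N + n) : ℝ) * v (n / 2 ^ N) = (A : ℝ) ^ N * 2 ^ N *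
      ∫ x in Ico (0 : ℝ) 1, ghostDensityApprox f A N x * v (⌊(2 : ℝ) ^ N * x⌋₊ / 2 ^ N) := by
  have hA' : (A : ℝ) ≠ 0 := by exact_mod_cast hA
  have h := setIntegral_Ico_zero_one_nat_floor_mul (Nat.two_pow_pos N)
    fun n => (f (2 ^ N + n) : ℝ) / (A : ℝ) ^ N * v (n / 2 ^ N)
  simp only [Nat.cast_pow, Nat.cast_ofNat] at h
  rw [show (fun x => ghostDensityApprox f A N x * v (⌊(2 : ℝ) ^ N * x⌋₊ / 2 ^ N)) =
    fun x => (f (2 ^ N + ⌊(2 : ℝ) ^ N * x⌋₊) : ℝ) / (A : ℝ) ^ N * v (⌊(2 : ℝ) ^ N * x⌋₊ / 2 ^ N)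
    from rfl, h, Finset.sum_div, Finset.mul_sum]
  refine Finset.sum_congr rfl fun n _ => ?_
  field_simp

lemma integral_ghostApprox_eq_div (hA : A ≠ 0) (g : BoundedContinuousFunction ℝ ℝ) (N : ℕ) :
    ∫ x, g x ∂ghostApprox f N =
      (∫ x in Ico (0 : ℝ) 1, ghostDensityApprox f A N x * g (⌊(2 : ℝ) ^ N * x⌋₊ / 2 ^ N)) /
        ∫ x in Ico (0 : ℝ) 1, ghostDensityApprox f A N x := by
  have hmass := sum_eq_setIntegral_ghostDensityApprox (f := f) hA N fun _ => 1
  simp only [mul_one] at hmass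
  have hA' : (A : ℝ) ^ N * 2 ^ N ≠ 0 := by positivity
  rw [integral_ghostApprox, sum_eq_setIntegral_ghostDensityApprox hA, hmass,
    mul_div_mul_left _ _ hA']

lemma tendsto_setIntegral_ghostDensityApprox_mul (hA : 1 < A)
    (heven : ∀ n, 1 ≤ n → f (2 * n) = A * f n + b₀)
    (hodd : ∀ n, 1 ≤ n → f (2 * n + 1) = A * f n + b₁) (g : BoundedContinuousFunction ℝ ℝ) :
    Tendsto (fun N => ∫ x in Ico (0 : ℝ) 1,
        ghostDensityApprox f A N x * g (⌊(2 : ℝ) ^ N * x⌋₊ / 2 ^ N)) atTop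
      (𝓝 (∫ x in Ico (0 : ℝ) 1, ghostDensity f A x * g x)) := by
  have hsample : ∀ x : ℝ, 0 ≤ x →
      Tendsto (fun N : ℕ => (⌊(2 : ℝ) ^ N * x⌋₊ : ℝ) / 2 ^ N) atTop (𝓝 x) := fun x hx => by
    simp_rw [mul_comm _ x]
    exact (tendsto_nat_floor_mul_div_atTop hx).comp
      (tendsto_pow_atTop_atTop_of_one_lt one_lt_two)
  refine tendsto_integral_of_dominated_convergence
    (fun _ => (f 1 + max b₀ b₁ / ((A : ℝ) - 1)) * ‖g‖)
    (fun N => by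
      have : Measurable fun x : ℝ => (⌊(2 : ℝ) ^ N * x⌋₊ : ℝ) / 2 ^ N := by fun_prop
      exact ((measurable_ghostDensityApprox N).mul
        (g.continuous.measurable.comp this)).aestronglyMeasurable)
    (integrable_const _) (fun N => ae_restrict_of_forall_mem measurableSet_Ico fun x hx => ?_)
    (ae_restrict_of_forall_mem measurableSet_Ico fun x hx =>
      (tendsto_ghostDensityApprox hA heven hodd x).mul
        ((g.continuous.tendsto x).comp (hsample x hx.1)))
  rw [norm_mul, Real.norm_of_nonneg (ghostDensityApprox_nonneg N x)]
  have hA' : (1 : ℝ) < A := by exact_mod_cast hA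
  exact mul_le_mul (ghostDensityApprox_mem_Icc hA heven hodd hx N).2 (g.norm_coe_le_norm _)
    (norm_nonneg _) (by positivity)

end GhostDensity

theorem stmt_6_general (A₀ A₁ b₀ b₁ : ℕ)
    (f : ℕ → ℕ) (hf1 : 1 ≤ f 1)
    (heven : ∀ n, 1 ≤ n → f (2 * n) = A₀ * f n + b₀)
    (hodd : ∀ n, 1 ≤ n → f (2 * n + 1) = A₁ * f n + b₁)
    (hA : A₀ = A₁) (hA1 : 1 < A₀) :
    ∃ μ : Measure ℝ, IsProbabilityMeasure μ ∧ WeakLimit (ghostApprox f) μ ∧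
      μ ≪ volume.restrict (Set.Ico (0:ℝ) 1) := by
  subst hA
  have hpos := setIntegral_ghostDensity_pos hf1 hA1 heven hodd
  refine ⟨normalizedWithDensity (volume.restrict (Ico 0 1)) (ghostDensity f A₀),
    isProbabilityMeasure_normalizedWithDensity (integrableOn_ghostDensity hA1 heven hodd)
      (ae_of_all _ ghostDensity_nonneg) hpos,
    fun g => ?_, normalizedWithDensity_absolutelyContinuous⟩
  have hmass := tendsto_setIntegral_ghostDensityApprox_mul hA1 heven hodd
    (BoundedContinuousFunction.const ℝ 1)
  simp only [BoundedContinuousFunction.const_apply, mul_one] at hmass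
  simp only [integral_ghostApprox_eq_div (by omega : A₀ ≠ 0),
    integral_normalizedWithDensity measurable_ghostDensity ghostDensity_nonneg]
  exact (tendsto_setIntegral_ghostDensityApprox_mul hA1 heven hodd g).div hmass hpos.ne'

theorem stmt_6 (A₀ A₁ b₀ b₁ : ℕ) (hnz : ¬(A₀ = 0 ∧ A₁ = 0 ∧ b₀ = 0 ∧ b₁ = 0))
    (f : ℕ → ℕ) (hf1 : 1 ≤ f 1)
    (heven : ∀ n, 1 ≤ n → f (2 * n) = A₀ * f n + b₀)
    (hodd : ∀ n, 1 ≤ n → f (2 * n + 1) = A₁ * f n + b₁)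
    (hb : 1 ≤ b₀ + b₁) (hA : A₀ = A₁) (hA1 : 1 < A₀) :
    ∃ μ : Measure ℝ, IsProbabilityMeasure μ ∧ WeakLimit (ghostApprox f) μ ∧
      μ ≪ volume.restrict (Set.Ico (0:ℝ) 1) :=
  stmt_6_general A₀ A₁ b₀ b₁ f hf1 heven hodd hA hA1
end

section
/- Assume b₀ + b₁ ≥ 1 and 1 ≤ A₀ < A₁, and let μ be the ghost measure of f. Set Λ = log(2A₁/(A₀+A₁)) / log(A₁/A₀), and let ℜ_Λ ⊆ [0,1) be the set of all x whose binary expansion has lower density of zeroes, liminf_{i→∞} (#{1 ≤ j ≤ i : d_j(x) = 0})/i, strictly greater than Λ. Then μ(ℜ_Λ) = 0, i.e. μ is concentrated on the complement of ℜ_Λ. -/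
/-!
Write `s = A₀ + A₁` and `b = b₀ + b₁`. Below a node `n ≥ 1`, the values of `f` in the `L`-th
generation sum to at most `s ^ L * (f n + b)`, while the whole `(N + L)`-th generation sums to at
least `s ^ (N + L)`. So every approximant `μ_{N+L}` gives the dyadic cylinder of the level-`N` node
`n` mass at most `(f n + b) / s ^ N`, and by the portmanteau theorem `μ` gives its interior
at most that much too. Each binary digit `0` (resp. `1`) of `n` multiplies `f` by `A₀`
(resp. `A₁`), up to the affine terms. Hence the at most `2 ^ N` cylinders whose digits contain
more than `r N` zeros carry mass `O(N θ ^ N)` with `θ = (2 A₁ / s) (A₀ / A₁) ^ r`, and `θ < 1`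
exactly when `r > Λ`. The same bound with no zero digits shows that `μ` has no atoms at dyadic
points, so the endpoints of the cylinders do not matter. Finally, for some rational `r > Λ`, a
point of `ℜ_Λ` lies in such a cylinder at every large level.
-/

open MeasureTheory Filter Topology

open Finset
open scoped ENNReal

def zeroDigits : ℕ → ℕ → ℕ
  | 0, _ => 0
  | N + 1, k => zeroDigits N (k / 2) + if k % 2 = 0 then 1 else 0

theorem zeroDigits_le (N k : ℕ) : zeroDigits N k ≤ N := by
  induction N generalizing k with
  | zero => rfl
  | succ N ih => have := ih (k / 2); rw [zeroDigits]; split <;> omega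

theorem card_filter_floor_even_eq_zeroDigits {x : ℝ} (hx : 0 ≤ x) (N : ℕ) :
    #{j ∈ Icc 1 N | ⌊(2 : ℝ) ^ j * x⌋ % 2 = 0} = zeroDigits N ⌊2 ^ N * x⌋₊ := by
  induction N with
  | zero => rfl
  | succ N ih =>
    have hfloor : ⌊(2 : ℝ) ^ N * x⌋₊ = ⌊(2 : ℝ) ^ (N + 1) * x⌋₊ / 2 := by
      rw [← Nat.floor_div_natCast, pow_succ]; congr 1; push_cast; ring
    have hparity :
        ⌊(2 : ℝ) ^ (N + 1) * x⌋ % 2 = 0 ↔ ⌊(2 : ℝ) ^ (N + 1) * x⌋₊ % 2 = 0 := by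
      rw [← Int.natCast_floor_eq_floor (by positivity)]; omega
    rw [← insert_Icc_right_eq_Icc_add_one (by omega), filter_insert, zeroDigits, ← hfloor,
      ← ih]
    by_cases h : ⌊(2 : ℝ) ^ (N + 1) * x⌋₊ % 2 = 0
    · rw [if_pos (hparity.mpr h), if_pos h, card_insert_of_notMem (by simp)]
    · rw [if_neg (hparity.not.mpr h), if_neg h, add_zero]

def subtreeSum (f : ℕ → ℕ) (L n : ℕ) : ℕ :=
  ∑ i ∈ range (2 ^ L), f (2 ^ L * n + i)

theorem subtreeSum_zero (f : ℕ → ℕ) (n : ℕ) : subtreeSum f 0 n = f n := by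
  simp [subtreeSum]

theorem subtreeSum_succ (f : ℕ → ℕ) (L n : ℕ) :
    subtreeSum f (L + 1) n = subtreeSum f L (2 * n) + subtreeSum f L (2 * n + 1) := by
  rw [subtreeSum, pow_succ, mul_two, sum_range_add]
  congr 1 <;> refine sum_congr rfl fun i _ => congrArg f ?_ <;> ring

theorem sum_range_mul {M : Type*} [AddCommMonoid M] (g : ℕ → M) (m a : ℕ) :
    ∑ n ∈ range (m * a), g n = ∑ k ∈ range a, ∑ i ∈ range m, g (m * k + i) := by
  induction a with
  | zero => simp
  | succ a ih => rw [mul_add_one, sum_range_add, ih, sum_range_succ]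

open Classical in
theorem sum_filter_le_sum_subtreeSum (f : ℕ → ℕ) {N L : ℕ} {P : ℕ → Prop} {W : Finset ℕ}
    (hW : ∀ n < 2 ^ (N + L), P n → n / 2 ^ L ∈ W) :
    ∑ n ∈ range (2 ^ (N + L)) with P n, f (2 ^ (N + L) + n) ≤
      ∑ k ∈ W, subtreeSum f L (2 ^ N + k) := by
  calc ∑ n ∈ range (2 ^ (N + L)) with P n, f (2 ^ (N + L) + n)
      ≤ ∑ n ∈ range (2 ^ (N + L)) with n / 2 ^ L ∈ W, f (2 ^ (N + L) + n) :=
        sum_le_sum_of_subset (fun n hn => by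
          simp only [mem_filter, mem_range] at hn ⊢
          exact ⟨hn.1, hW n hn.1 hn.2⟩)
    _ = ∑ k ∈ range (2 ^ N) with k ∈ W, subtreeSum f L (2 ^ N + k) := by
      rw [sum_filter, sum_filter, pow_add, mul_comm, sum_range_mul]
      refine sum_congr rfl fun k _ => ?_
      have hdiv : ∀ i ∈ range (2 ^ L), (2 ^ L * k + i) / 2 ^ L = k := fun i hi => by
        rw [Nat.mul_add_div (by positivity), Nat.div_eq_of_lt (mem_range.mp hi),
          add_zero]
      rw [sum_congr rfl fun i hi => by rw [hdiv i hi]]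
      split_ifs
      · exact sum_congr rfl fun i _ => congrArg f (by ring)
      · simp
    _ ≤ ∑ k ∈ W, subtreeSum f L (2 ^ N + k) :=
        sum_le_sum_of_subset (fun k hk => (mem_filter.mp hk).2)

theorem sum_range_eq_subtreeSum_one (f : ℕ → ℕ) (N : ℕ) :
    ∑ n ∈ range (2 ^ N), f (2 ^ N + n) = subtreeSum f N 1 := by
  simp [subtreeSum]

open Classical in
theorem ghostApprox_apply (f : ℕ → ℕ) (N : ℕ) (S : Set ℝ) :
    ghostApprox f N S = (∑ n ∈ range (2 ^ N), (f (2 ^ N + n) : ℝ≥0∞))⁻¹ *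
      ∑ n ∈ range (2 ^ N) with ((n : ℕ) : ℝ) / 2 ^ N ∈ S, (f (2 ^ N + n) : ℝ≥0∞) := by
  simp [ghostApprox, Measure.dirac_apply, Set.indicator, sum_filter]

theorem div_two_pow_eq (t : ℝ) (N L : ℕ) : t / 2 ^ N = 2 ^ L * t / 2 ^ (N + L) := by
  rw [pow_add, mul_comm ((2 : ℝ) ^ N), mul_div_mul_left _ _ (by positivity)]

theorem natCast_div_two_pow_lt_iff (n : ℕ) (t : ℝ) (N L : ℕ) :
    (n : ℝ) / 2 ^ (N + L) < t / 2 ^ N ↔ (n : ℝ) < 2 ^ L * t := by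
  rw [div_two_pow_eq t N L, div_lt_div_iff_of_pos_right (by positivity)]

theorem lt_natCast_div_two_pow_iff (n : ℕ) (t : ℝ) (N L : ℕ) :
    t / 2 ^ N < (n : ℝ) / 2 ^ (N + L) ↔ 2 ^ L * t < n := by
  rw [div_two_pow_eq t N L, div_lt_div_iff_of_pos_right (by positivity)]

theorem floor_two_pow_mul_lt {x : ℝ} (hx : x ∈ Set.Ico (0 : ℝ) 1) (N : ℕ) :
    ⌊(2 : ℝ) ^ N * x⌋₊ < 2 ^ N := by
  rw [Nat.floor_lt (by have := hx.1; positivity)]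
  push_cast
  nlinarith [hx.2, pow_pos (two_pos : (0 : ℝ) < 2) N]

theorem eq_or_mem_Ioo_floor {x : ℝ} (hx : 0 ≤ x) (N : ℕ) :
    x = ⌊(2 : ℝ) ^ N * x⌋₊ / 2 ^ N ∨
      x ∈ Set.Ioo ((⌊(2 : ℝ) ^ N * x⌋₊ : ℝ) / 2 ^ N)
        ((⌊(2 : ℝ) ^ N * x⌋₊ + 1) / 2 ^ N) := by
  have h2N : (0 : ℝ) < 2 ^ N := by positivity
  have hle : (⌊(2 : ℝ) ^ N * x⌋₊ : ℝ) / 2 ^ N ≤ x := by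
    rw [div_le_iff₀ h2N, mul_comm]; exact Nat.floor_le (by positivity)
  have hlt : x < (⌊(2 : ℝ) ^ N * x⌋₊ + 1) / 2 ^ N := by
    rw [lt_div_iff₀ h2N, mul_comm]; exact Nat.lt_floor_add_one _
  rcases hle.eq_or_lt with h | h
  · exact Or.inl h.symm
  · exact Or.inr ⟨h, hlt⟩

theorem pow_mul_pow_sub_le {p q r : ℝ} (hp : 0 < p) (hpq : p ≤ q) {z N : ℕ} (hzN : z ≤ N)
    (hz : r * N ≤ z) : p ^ z * q ^ (N - z) ≤ q ^ N * (p / q) ^ (r * N) := by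
  have hq : 0 < q := hp.trans_le hpq
  have hsplit : p ^ z * q ^ (N - z) = q ^ N * (p / q) ^ z := by
    rw [div_pow, ← Nat.sub_add_cancel hzN, pow_add]
    field_simp
    rw [Nat.sub_add_cancel hzN]
  rw [hsplit, ← Real.rpow_natCast (p / q)]
  exact mul_le_mul_of_nonneg_left
    (Real.rpow_le_rpow_of_exponent_ge (by positivity) ((div_le_one hq).mpr hpq) hz)
    (by positivity)

theorem mul_rpow_lt_one {p q r : ℝ} (hp : 0 < p) (hpq : p < q)
    (hr : Real.log (2 * q / (p + q)) / Real.log (q / p) < r) :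
    2 * q / (p + q) * (p / q) ^ r < 1 := by
  have hq : 0 < q := hp.trans hpq
  have hlog : 0 < Real.log (q / p) := Real.log_pos ((one_lt_div hp).mpr hpq)
  rw [div_lt_iff₀ hlog] at hr
  have hinv : Real.log (p / q) = -Real.log (q / p) := by rw [← Real.log_inv, inv_div]
  rw [← Real.log_neg_iff (by positivity), Real.log_mul (by positivity) (by positivity),
    Real.log_rpow (by positivity), hinv]
  linarith

theorem tendsto_affine_mul_pow {q : ℝ} (hq0 : 0 ≤ q) (hq1 : q < 1) (C D : ℝ) :
    Tendsto (fun N : ℕ => (C + D * (N + 1)) * q ^ N) atTop (𝓝 0) := by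
  have h := ((tendsto_pow_atTop_nhds_zero_of_lt_one hq0 hq1).const_mul (C + D)).add
    ((tendsto_self_mul_const_pow_of_lt_one hq0 hq1).const_mul D)
  simp only [mul_zero, add_zero] at h
  exact h.congr fun N => by ring

noncomputable def manyZerosIndices (r : ℝ) (N : ℕ) : Finset ℕ :=
  (range (2 ^ N)).filter fun k => r * N < zeroDigits N k

def manyZerosSet (r : ℝ) (N₀ : ℕ) : Set ℝ :=
  {x ∈ Set.Ico 0 1 | ∀ N ≥ N₀, r * N < zeroDigits N ⌊(2 : ℝ) ^ N * x⌋₊}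

theorem manyZerosSet_subset (r : ℝ) {N₀ N : ℕ} (hN : N₀ ≤ N) :
    manyZerosSet r N₀ ⊆
      (⋃ k ∈ manyZerosIndices r N,
          Set.Ioo ((k : ℝ) / 2 ^ N) ((k + 1) / 2 ^ N)) ∪
        ⋃ k ∈ range (2 ^ N), {(k : ℝ) / 2 ^ N} := by
  intro x ⟨hx, hzeros⟩
  have hk := mem_range.mpr (floor_two_pow_mul_lt hx N)
  rcases eq_or_mem_Ioo_floor hx.1 N with h | h
  · exact Or.inr (Set.mem_biUnion hk h)
  · exact Or.inl (Set.mem_biUnion (mem_filter.mpr ⟨hk, hzeros N hN⟩) h)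

theorem exists_rat_mem_manyZerosSet {x : ℝ} (hx : x ∈ Set.Ico (0 : ℝ) 1) {Λ : ℝ}
    (h : Λ < liminf (fun i : ℕ =>
      (((Icc 1 i).filter fun j => ⌊(2 : ℝ) ^ j * x⌋ % 2 = 0).card : ℝ) / i) atTop) :
    ∃ q : ℚ, Λ < q ∧ ∃ N₀, x ∈ manyZerosSet q N₀ := by
  obtain ⟨q, hΛq, hq⟩ := exists_rat_btwn h
  obtain ⟨N₀, hN₀⟩ := eventually_atTop.mp
    (eventually_lt_of_lt_liminf hq (isBoundedUnder_of ⟨0, fun i => by positivity⟩))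
  refine ⟨q, hΛq, max N₀ 1, hx, fun N hN => ?_⟩
  have hN_pos : (0 : ℝ) < N := by exact_mod_cast (le_max_right _ _).trans hN
  have := hN₀ N ((le_max_left _ _).trans hN)
  rwa [lt_div_iff₀ hN_pos, card_filter_floor_even_eq_zeroDigits hx.1] at this

structure AffineTwoRegular (A₀ A₁ b₀ b₁ : ℕ) (f : ℕ → ℕ) : Prop where
  two_mul : ∀ n, 1 ≤ n → f (2 * n) = A₀ * f n + b₀
  two_mul_add_one : ∀ n, 1 ≤ n → f (2 * n + 1) = A₁ * f n + b₁

namespace AffineTwoRegular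

variable {A₀ A₁ b₀ b₁ : ℕ} {f : ℕ → ℕ}

theorem add_le_pow_mul (hf : AffineTwoRegular A₀ A₁ b₀ b₁ f) (hA₀ : 1 ≤ A₀) (hA₁ : 1 ≤ A₁)
    {N k : ℕ} (hk : k < 2 ^ N) :
    f (2 ^ N + k) + (b₀ + b₁) ≤
      A₀ ^ zeroDigits N k * A₁ ^ (N - zeroDigits N k) * (f 1 + (b₀ + b₁) * (N + 1)) := by
  induction N generalizing k with
  | zero =>
    obtain rfl : k = 0 := by omega
    simp [zeroDigits]
  | succ N ih =>
    set m := k / 2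
    set z := zeroDigits N m
    have hm : m < 2 ^ N := by rw [pow_succ] at hk; omega
    have hzN : z ≤ N := zeroDigits_le N m
    have hnode : 1 ≤ 2 ^ N + m := le_add_right Nat.one_le_two_pow
    have hP : 1 ≤ A₀ ^ z * A₁ ^ (N - z) :=
      Nat.one_le_iff_ne_zero.mpr (by positivity)
    have step : ∀ a c, 1 ≤ a → c ≤ b₀ + b₁ →
        a * f (2 ^ N + m) + c + (b₀ + b₁) ≤
          a * (A₀ ^ z * A₁ ^ (N - z)) * (f 1 + (b₀ + b₁) * (N + 1 + 1)) := by
      intro a c ha hc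
      have h1 := Nat.mul_le_mul_left a (ih hm)
      have h2 : b₀ + b₁ ≤ a * (A₀ ^ z * A₁ ^ (N - z)) * (b₀ + b₁) :=
        Nat.le_mul_of_pos_left _ (Nat.mul_pos ha hP)
      have h3 : c ≤ a * (b₀ + b₁) := hc.trans (Nat.le_mul_of_pos_left _ ha)
      calc a * f (2 ^ N + m) + c + (b₀ + b₁)
          ≤ a * (f (2 ^ N + m) + (b₀ + b₁)) + a * (A₀ ^ z * A₁ ^ (N - z)) * (b₀ + b₁) := by
            rw [mul_add]; omega
        _ ≤ a * (A₀ ^ z * A₁ ^ (N - z) * (f 1 + (b₀ + b₁) * (N + 1)))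
            + a * (A₀ ^ z * A₁ ^ (N - z)) * (b₀ + b₁) := Nat.add_le_add_right h1 _
        _ = _ := by ring
    rcases Nat.mod_two_eq_zero_or_one k with h | h
    · have hk' : 2 ^ (N + 1) + k = 2 * (2 ^ N + m) := by rw [pow_succ]; omega
      rw [hk', hf.two_mul _ hnode, zeroDigits, if_pos h,
        show N + 1 - (z + 1) = N - z by omega]
      convert step A₀ b₀ hA₀ (by omega) using 1
      ring
    · have hk' : 2 ^ (N + 1) + k = 2 * (2 ^ N + m) + 1 := by rw [pow_succ]; omega
      rw [hk', hf.two_mul_add_one _ hnode, zeroDigits, if_neg (by omega), add_zero,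
        show N + 1 - z = N - z + 1 by omega]
      convert step A₁ b₁ hA₁ (by omega) using 1
      ring

theorem add_le_pow_mul_real (hf : AffineTwoRegular A₀ A₁ b₀ b₁ f)
    (hA₀ : 1 ≤ A₀) (hA₁ : 1 ≤ A₁) {N k : ℕ} (hk : k < 2 ^ N) :
    (f (2 ^ N + k) : ℝ) + (b₀ + b₁) ≤
      A₀ ^ zeroDigits N k * A₁ ^ (N - zeroDigits N k) * (f 1 + (b₀ + b₁) * (N + 1)) := by
  exact_mod_cast hf.add_le_pow_mul hA₀ hA₁ hk

theorem pow_mul_le_subtreeSum (hf : AffineTwoRegular A₀ A₁ b₀ b₁ f) (L : ℕ)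
    {n : ℕ} (hn : 1 ≤ n) : (A₀ + A₁) ^ L * f n ≤ subtreeSum f L n := by
  induction L generalizing n with
  | zero => simp [subtreeSum_zero]
  | succ L ih =>
    rw [subtreeSum_succ]
    calc (A₀ + A₁) ^ (L + 1) * f n ≤ (A₀ + A₁) ^ L * (f (2 * n) + f (2 * n + 1)) := by
          rw [hf.two_mul n hn, hf.two_mul_add_one n hn, pow_succ]
          nlinarith [Nat.zero_le ((A₀ + A₁) ^ L * (b₀ + b₁))]
      _ ≤ _ := by rw [mul_add]; exact add_le_add (ih (by omega)) (ih (by omega))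

theorem subtreeSum_add_le (hf : AffineTwoRegular A₀ A₁ b₀ b₁ f)
    (hA : 3 ≤ A₀ + A₁) (L : ℕ) {n : ℕ} (hn : 1 ≤ n) :
    subtreeSum f L n + (b₀ + b₁) * 2 ^ L ≤ (A₀ + A₁) ^ L * (f n + (b₀ + b₁)) := by
  induction L generalizing n with
  | zero => simp [subtreeSum_zero]
  | succ L ih =>
    have h2n := ih (n := 2 * n) (by omega)
    have h2n1 := ih (n := 2 * n + 1) (by omega)
    rw [hf.two_mul n hn] at h2n
    rw [hf.two_mul_add_one n hn] at h2n1
    rw [subtreeSum_succ, pow_succ, pow_succ]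
    nlinarith [Nat.mul_le_mul_left ((A₀ + A₁) ^ L * (b₀ + b₁)) hA]

theorem isProbabilityMeasure_ghostApprox (hf : AffineTwoRegular A₀ A₁ b₀ b₁ f)
    (hf1 : 1 ≤ f 1) (hA : 0 < A₀ + A₁) (N : ℕ) : IsProbabilityMeasure (ghostApprox f N) := by
  have hpos : 0 < subtreeSum f N 1 :=
    (Nat.mul_pos (Nat.pow_pos hA) hf1).trans_le (hf.pow_mul_le_subtreeSum N le_rfl)
  constructor
  rw [ghostApprox_apply]
  simp only [Set.mem_univ, filter_true]
  rw [← Nat.cast_sum, sum_range_eq_subtreeSum_one]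
  exact ENNReal.inv_mul_cancel (by exact_mod_cast hpos.ne') (ENNReal.natCast_ne_top _)

open Classical in
theorem ghostApprox_le (hf : AffineTwoRegular A₀ A₁ b₀ b₁ f) (hf1 : 1 ≤ f 1)
    (hA : 3 ≤ A₀ + A₁) {S : Set ℝ} {N L : ℕ} {W : Finset ℕ}
    (hW : ∀ n : ℕ, n < 2 ^ (N + L) → (n : ℝ) / 2 ^ (N + L) ∈ S → n / 2 ^ L ∈ W) :
    ghostApprox f (N + L) S ≤
      ENNReal.ofReal ((∑ k ∈ W, ((f (2 ^ N + k) : ℝ) + (b₀ + b₁))) / (A₀ + A₁) ^ N) := by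
  have hnum : ∑ n ∈ range (2 ^ (N + L)) with ((n : ℕ) : ℝ) / 2 ^ (N + L) ∈ S,
      f (2 ^ (N + L) + n) ≤ (A₀ + A₁) ^ L * ∑ k ∈ W, (f (2 ^ N + k) + (b₀ + b₁)) := by
    refine (sum_filter_le_sum_subtreeSum f hW).trans ?_
    rw [mul_sum]
    refine sum_le_sum fun k _ => ?_
    have := hf.subtreeSum_add_le hA L (n := 2 ^ N + k) (le_add_right Nat.one_le_two_pow)
    omega
  have hden : (A₀ + A₁) ^ (N + L) ≤ subtreeSum f (N + L) 1 :=
    (Nat.le_mul_of_pos_right _ hf1).trans (hf.pow_mul_le_subtreeSum _ le_rfl)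
  have hA_pos : (0 : ℝ) < A₀ + A₁ := by exact_mod_cast (by omega : 0 < A₀ + A₁)
  have hden_pos : (0 : ℝ) < (A₀ + A₁) ^ (N + L) := by positivity
  have hden' : ((A₀ + A₁ : ℕ) : ℝ) ^ (N + L) ≤ subtreeSum f (N + L) 1 := by
    exact_mod_cast hden
  rw [ghostApprox_apply, ← Nat.cast_sum, ← Nat.cast_sum, sum_range_eq_subtreeSum_one,
    ← ENNReal.ofReal_natCast, ← ENNReal.ofReal_natCast, ← ENNReal.ofReal_inv_of_pos
      (hden_pos.trans_le (by exact_mod_cast hden')), ← ENNReal.ofReal_mul (by positivity)]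
  refine ENNReal.ofReal_le_ofReal ?_
  calc ((subtreeSum f (N + L) 1 : ℕ) : ℝ)⁻¹ * _
      ≤ (((A₀ + A₁ : ℕ) : ℝ) ^ (N + L))⁻¹ *
          (((A₀ + A₁ : ℕ) : ℝ) ^ L * ∑ k ∈ W, ((f (2 ^ N + k) : ℝ) + (b₀ + b₁))) := by
        gcongr
        exact_mod_cast hnum
    _ = _ := by
        push_cast
        rw [pow_add, ← div_eq_inv_mul, mul_comm ((A₀ + A₁ : ℝ) ^ N),
          mul_div_mul_left _ _ (by positivity)]

theorem measure_le_of_ghostApprox_le (hf : AffineTwoRegular A₀ A₁ b₀ b₁ f)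
    (hf1 : 1 ≤ f 1) (hA : 0 < A₀ + A₁) {μ : Measure ℝ} [IsProbabilityMeasure μ]
    (hlim : WeakLimit (ghostApprox f) μ) {U : Set ℝ} (hU : IsOpen U) {c : ℝ≥0∞} {N : ℕ}
    (h : ∀ L, ghostApprox f (N + L) U ≤ c) : μ U ≤ c := by
  let ν : ℕ → ProbabilityMeasure ℝ := fun M =>
    ⟨ghostApprox f M, hf.isProbabilityMeasure_ghostApprox hf1 hA M⟩
  have hν : Tendsto ν atTop (𝓝 ⟨μ, inferInstance⟩) :=
    ProbabilityMeasure.tendsto_iff_forall_integral_tendsto.mpr hlim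
  refine (ProbabilityMeasure.le_liminf_measure_open_of_tendsto hν hU).trans
    (liminf_le_of_frequently_le' (Eventually.frequently ?_))
  filter_upwards [eventually_ge_atTop N] with M hM
  obtain ⟨L, rfl⟩ := Nat.exists_eq_add_of_le hM
  exact h L

theorem sum_manyZerosIndices_le (hf : AffineTwoRegular A₀ A₁ b₀ b₁ f)
    (hA₀ : 1 ≤ A₀) (hlt : A₀ < A₁) (r : ℝ) (N : ℕ) :
    (∑ k ∈ manyZerosIndices r N,
        ((f (2 ^ N + k) : ℝ) + (b₀ + b₁))) / (A₀ + A₁) ^ N ≤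
      (f 1 + (b₀ + b₁) * (N + 1)) * (2 * A₁ / (A₀ + A₁) * ((A₀ : ℝ) / A₁) ^ r) ^ N := by
  set F : ℝ := f 1 + (b₀ + b₁) * (N + 1)
  have hF : 0 ≤ F := by positivity
  have hA₀' : (0 : ℝ) < A₀ := by exact_mod_cast hA₀
  have hlt' : (A₀ : ℝ) ≤ A₁ := by exact_mod_cast hlt.le
  have hterm : ∀ k ∈ manyZerosIndices r N,
      (f (2 ^ N + k) : ℝ) + (b₀ + b₁) ≤ (A₁ : ℝ) ^ N * ((A₀ : ℝ) / A₁) ^ (r * N) * F := by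
    intro k hk
    obtain ⟨hk, hz⟩ := mem_filter.mp hk
    exact (hf.add_le_pow_mul_real hA₀ (by omega) (mem_range.mp hk)).trans
      (mul_le_mul_of_nonneg_right (pow_mul_pow_sub_le hA₀' hlt' (zeroDigits_le N k) hz.le) hF)
  have hcard : ((manyZerosIndices r N).card : ℝ) ≤ 2 ^ N := by
    exact_mod_cast (card_filter_le _ _).trans (card_range _).le
  calc _ ≤ (2 ^ N * ((A₁ : ℝ) ^ N * ((A₀ : ℝ) / A₁) ^ (r * N) * F)) / (A₀ + A₁) ^ N := by
        gcongr
        refine (sum_le_card_nsmul _ _ _ hterm).trans ?_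
        rw [nsmul_eq_mul]
        gcongr
    _ = _ := by
        rw [Real.rpow_mul_natCast (by positivity), mul_pow, div_pow, mul_pow]
        ring

theorem measure_biUnion_Ioo_le (hf : AffineTwoRegular A₀ A₁ b₀ b₁ f)
    (hf1 : 1 ≤ f 1) (hA₀ : 1 ≤ A₀) (hlt : A₀ < A₁) {μ : Measure ℝ} [IsProbabilityMeasure μ]
    (hlim : WeakLimit (ghostApprox f) μ) (r : ℝ) (N : ℕ) :
    μ (⋃ k ∈ manyZerosIndices r N,
        Set.Ioo ((k : ℝ) / 2 ^ N) ((k + 1) / 2 ^ N)) ≤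
      ENNReal.ofReal
        ((f 1 + (b₀ + b₁) * (N + 1)) * (2 * A₁ / (A₀ + A₁) * ((A₀ : ℝ) / A₁) ^ r) ^ N) := by
  refine hf.measure_le_of_ghostApprox_le hf1 (by omega) hlim (N := N)
    (isOpen_biUnion fun _ _ => isOpen_Ioo) fun L => ?_
  refine (hf.ghostApprox_le hf1 (by omega) ?_).trans
    (ENNReal.ofReal_le_ofReal (hf.sum_manyZerosIndices_le hA₀ hlt r N))
  intro n _ hn
  obtain ⟨k, hk, hlo, hhi⟩ := Set.mem_iUnion₂.mp hn
  rw [lt_natCast_div_two_pow_iff] at hlo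
  rw [natCast_div_two_pow_lt_iff] at hhi
  have hlo' : k * 2 ^ L ≤ n := by rw [mul_comm]; exact_mod_cast hlo.le
  have hhi' : n < (k + 1) * 2 ^ L := by rw [mul_comm]; exact_mod_cast hhi
  rwa [Nat.div_eq_of_lt_le hlo' hhi']

theorem measure_singleton_le (hf : AffineTwoRegular A₀ A₁ b₀ b₁ f)
    (hf1 : 1 ≤ f 1) (hA₀ : 1 ≤ A₀) (hlt : A₀ < A₁) {μ : Measure ℝ} [IsProbabilityMeasure μ]
    (hlim : WeakLimit (ghostApprox f) μ) {K M : ℕ} (hK : K < 2 ^ M) :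
    μ {(K : ℝ) / 2 ^ M} ≤
      ENNReal.ofReal (2 * ((f 1 + (b₀ + b₁) * (M + 1)) * ((A₁ : ℝ) / (A₀ + A₁)) ^ M)) := by
  have hsub : {(K : ℝ) / 2 ^ M} ⊆ Set.Ioo (((K : ℝ) - 1) / 2 ^ M) ((K + 1) / 2 ^ M) := by
    rw [Set.singleton_subset_iff]
    constructor <;> gcongr <;> linarith
  refine (measure_mono hsub).trans <| hf.measure_le_of_ghostApprox_le hf1 (by omega) hlim
    (N := M) isOpen_Ioo fun L =>
      (hf.ghostApprox_le hf1 (N := M) (W := Icc (K - 1) K) (by omega) ?_).trans ?_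
  · intro n _ ⟨hlo, hhi⟩
    rw [lt_natCast_div_two_pow_iff] at hlo
    rw [natCast_div_two_pow_lt_iff] at hhi
    have hlo' : K * 2 ^ L < n + 2 ^ L := by
      rw [mul_comm]; exact_mod_cast (by linarith : (2 : ℝ) ^ L * K < n + 2 ^ L)
    have hhi' : n < (K + 1) * 2 ^ L := by rw [mul_comm]; exact_mod_cast hhi
    rw [mem_Icc, Nat.le_div_iff_mul_le (by positivity), Nat.sub_mul, one_mul]
    exact ⟨by omega, Nat.lt_add_one_iff.mp ((Nat.div_lt_iff_lt_mul (by positivity)).mpr hhi')⟩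
  · refine ENNReal.ofReal_le_ofReal ?_
    have hA₀' : (1 : ℝ) ≤ A₀ := by exact_mod_cast hA₀
    have hlt' : (A₀ : ℝ) ≤ A₁ := by exact_mod_cast hlt.le
    have hterm : ∀ j ∈ Icc (K - 1) K,
        (f (2 ^ M + j) : ℝ) + (b₀ + b₁) ≤ (A₁ : ℝ) ^ M * (f 1 + (b₀ + b₁) * (M + 1)) := by
      intro j hj
      have hj : j < 2 ^ M := by have := (mem_Icc.mp hj).2; omega
      refine (hf.add_le_pow_mul_real hA₀ (by omega) hj).trans ?_
      gcongr
      simpa using pow_mul_pow_sub_le (r := 0) (by linarith) hlt' (zeroDigits_le M j)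
        (by simp)
    have hcard : ((Icc (K - 1) K).card : ℝ) ≤ 2 := by
      exact_mod_cast (Nat.card_Icc _ _).trans_le (by omega)
    calc _ ≤ (2 * ((A₁ : ℝ) ^ M * (f 1 + (b₀ + b₁) * (M + 1)))) / (A₀ + A₁) ^ M := by
          gcongr
          refine (sum_le_card_nsmul _ _ _ hterm).trans ?_
          rw [nsmul_eq_mul]
          gcongr
      _ = _ := by rw [div_pow]; ring

theorem measure_dyadic_eq_zero (hf : AffineTwoRegular A₀ A₁ b₀ b₁ f)
    (hf1 : 1 ≤ f 1) (hA₀ : 1 ≤ A₀) (hlt : A₀ < A₁) {μ : Measure ℝ} [IsProbabilityMeasure μ]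
    (hlim : WeakLimit (ghostApprox f) μ) {k N : ℕ} (hk : k < 2 ^ N) :
    μ {(k : ℝ) / 2 ^ N} = 0 := by
  have hA₀' : (0 : ℝ) < A₀ := by exact_mod_cast hA₀
  have hq : (A₁ : ℝ) / (A₀ + A₁) < 1 := (div_lt_one (by positivity)).mpr (by linarith)
  have hlimit : Tendsto (fun M : ℕ => ENNReal.ofReal
      (2 * ((f 1 + (b₀ + b₁) * (M + 1)) * ((A₁ : ℝ) / (A₀ + A₁)) ^ M))) atTop (𝓝 0) := by
    simpa using ENNReal.tendsto_ofReal
      ((tendsto_affine_mul_pow (by positivity) hq (f 1 : ℝ) (b₀ + b₁ : ℝ)).const_mul 2)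
  refine le_antisymm (ge_of_tendsto hlimit ?_) zero_le
  filter_upwards [eventually_ge_atTop N] with M hM
  obtain ⟨L, rfl⟩ := Nat.exists_eq_add_of_le hM
  have hK : 2 ^ L * k < 2 ^ (N + L) := by
    rw [pow_add, mul_comm (2 ^ N)]; exact Nat.mul_lt_mul_of_pos_left hk (by positivity)
  have := hf.measure_singleton_le hf1 hA₀ hlt hlim hK
  rwa [Nat.cast_mul, Nat.cast_pow, Nat.cast_ofNat, ← div_two_pow_eq] at this

theorem measure_manyZerosSet (hf : AffineTwoRegular A₀ A₁ b₀ b₁ f)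
    (hf1 : 1 ≤ f 1) (hA₀ : 1 ≤ A₀) (hlt : A₀ < A₁) {μ : Measure ℝ} [IsProbabilityMeasure μ]
    (hlim : WeakLimit (ghostApprox f) μ) {r : ℝ}
    (hr : Real.log (2 * (A₁ : ℝ) / ((A₀ : ℝ) + A₁)) / Real.log ((A₁ : ℝ) / A₀) < r) (N₀ : ℕ) :
    μ (manyZerosSet r N₀) = 0 := by
  have hA₀' : (0 : ℝ) < A₀ := by exact_mod_cast hA₀
  have hθ := mul_rpow_lt_one hA₀' (by exact_mod_cast hlt) hr
  have hlimit := ENNReal.tendsto_ofReal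
    (tendsto_affine_mul_pow (by positivity) hθ (f 1 : ℝ) (b₀ + b₁ : ℝ))
  rw [ENNReal.ofReal_zero] at hlimit
  refine le_antisymm (ge_of_tendsto hlimit ?_) zero_le
  filter_upwards [eventually_ge_atTop N₀] with N hN
  have hdyadic : μ (⋃ k ∈ range (2 ^ N), {(k : ℝ) / 2 ^ N}) = 0 :=
    (measure_biUnion_null_iff (range (2 ^ N)).countable_toSet).mpr fun k hk =>
      hf.measure_dyadic_eq_zero hf1 hA₀ hlt hlim (mem_range.mp hk)
  calc μ (manyZerosSet r N₀)
      ≤ μ (⋃ k ∈ manyZerosIndices r N, Set.Ioo ((k : ℝ) / 2 ^ N) ((k + 1) / 2 ^ N)) +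
          μ (⋃ k ∈ range (2 ^ N), {(k : ℝ) / 2 ^ N}) :=
        (measure_mono (manyZerosSet_subset r hN)).trans (measure_union_le _ _)
    _ ≤ _ := by rw [hdyadic, add_zero]; exact hf.measure_biUnion_Ioo_le hf1 hA₀ hlt hlim r N

end AffineTwoRegular

theorem stmt_13_general (A₀ A₁ b₀ b₁ : ℕ)
    (f : ℕ → ℕ) (hf1 : 1 ≤ f 1)
    (heven : ∀ n, 1 ≤ n → f (2 * n) = A₀ * f n + b₀)
    (hodd : ∀ n, 1 ≤ n → f (2 * n + 1) = A₁ * f n + b₁)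
    (hA0 : 1 ≤ A₀) (hlt : A₀ < A₁)
    (μ : Measure ℝ) (hμ : IsProbabilityMeasure μ)
    (hlim : WeakLimit (ghostApprox f) μ) :
    μ {x ∈ Set.Ico (0:ℝ) 1 |
        Real.log (2 * (A₁ : ℝ) / ((A₀ : ℝ) + A₁)) / Real.log ((A₁ : ℝ) / A₀) <
          Filter.liminf (fun i : ℕ =>
            ((((Finset.Icc 1 i).filter fun j => ⌊(2:ℝ) ^ j * x⌋ % 2 = 0).card : ℝ) / i)) atTop} =
      0 := by
  have hf : AffineTwoRegular A₀ A₁ b₀ b₁ f := ⟨heven, hodd⟩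
  set Λ := Real.log (2 * (A₁ : ℝ) / ((A₀ : ℝ) + A₁)) / Real.log ((A₁ : ℝ) / A₀)
  refine measure_mono_null (fun x ⟨hx, hΛ⟩ => ?_) <| measure_iUnion_null fun q : {q : ℚ // Λ < q} =>
    measure_iUnion_null fun N₀ => hf.measure_manyZerosSet hf1 hA0 hlt hlim q.2 N₀
  obtain ⟨q, hq, N₀, hmem⟩ := exists_rat_mem_manyZerosSet hx hΛ
  exact Set.mem_iUnion₂.mpr ⟨⟨q, hq⟩, N₀, hmem⟩

theorem stmt_13 (A₀ A₁ b₀ b₁ : ℕ) (hnz : ¬(A₀ = 0 ∧ A₁ = 0 ∧ b₀ = 0 ∧ b₁ = 0))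
    (f : ℕ → ℕ) (hf1 : 1 ≤ f 1)
    (heven : ∀ n, 1 ≤ n → f (2 * n) = A₀ * f n + b₀)
    (hodd : ∀ n, 1 ≤ n → f (2 * n + 1) = A₁ * f n + b₁)
    (hb : 1 ≤ b₀ + b₁) (hA0 : 1 ≤ A₀) (hlt : A₀ < A₁)
    (μ : Measure ℝ) (hμ : IsProbabilityMeasure μ)
    (hlim : WeakLimit (ghostApprox f) μ) :
    μ {x ∈ Set.Ico (0:ℝ) 1 |
        Real.log (2 * (A₁ : ℝ) / ((A₀ : ℝ) + A₁)) / Real.log ((A₁ : ℝ) / A₀) <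
          Filter.liminf (fun i : ℕ =>
            ((((Finset.Icc 1 i).filter fun j => ⌊(2:ℝ) ^ j * x⌋ % 2 = 0).card : ℝ) / i)) atTop} =
      0 :=
  stmt_13_general A₀ A₁ b₀ b₁ f hf1 heven hodd hA0 hlt μ hμ hlim
end
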